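/- The set D⁵₁₄ consisting of the fourteen RCC5 relations {DR}, {PO}, {PP}, {PP⁻¹}, {EQ}, {PO,PP}, {PO,PP⁻¹}, {DR,PO}, {DR,PO,PP}, {DR,PO,PP⁻¹}, {PO,PP,PP⁻¹,EQ}, ⋆, {PP,EQ}, {PP⁻¹,EQ} is a distributive subalgebra of RCC5, and the set D⁵₂₀ consisting of the twenty RCC5 relations {DR}, {PO}, {PP}, {PP⁻¹}, {EQ}, {PO,PP}, {PO,PP⁻¹}, {DR,PO}, {DR,PO,PP}, {DR,PO,PP⁻¹}, {PO,PP,PP⁻¹,EQ}, ⋆, {PO,EQ}, {PO,PP,EQ}, {PO,PP⁻¹,EQ}, {PO,PP,PP⁻¹}, {DR,PO,EQ}, {DR,PO,PP,EQ}, {DR,PO,PP⁻¹,EQ}, {DR,PO,PP,PP⁻¹} is also a distributive subalgebra of RCC5. -/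
import Mathlib


/-- A *region* is a nonempty regular closed subset of the Euclidean plane `ℝ × ℝ`. -/
def Region : Type :=
  {x : Set (ℝ × ℝ) // x.Nonempty ∧ x = closure (interior x)}

namespace Region

/-- Part-of: `x P y` iff `x ⊆ y`. -/
def P (x y : Region) : Prop := x.1 ⊆ y.1

/-- Overlap: `x O y` iff some region is a common part of `x` and `y`. -/
def O (x y : Region) : Prop := ∃ z : Region, z.1 ⊆ x.1 ∧ z.1 ⊆ y.1

/-- Connection: `x C y` iff `x ∩ y ≠ ∅`. -/
def C (x y : Region) : Prop := (x.1 ∩ y.1).Nonempty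

end Region

/-- The five basic RCC5 relations. -/
inductive RCC5Basic : Type
  | DR | PO | PP | PPi | EQ
deriving DecidableEq

namespace RCC5Basic

/-- Interpretation of the basic RCC5 relations on regions. -/
def interp : RCC5Basic → Region → Region → Prop
  | DR, x, y => ¬ Region.O x y
  | PO, x, y => Region.O x y ∧ ¬ x.1 ⊆ y.1 ∧ ¬ y.1 ⊆ x.1
  | PP, x, y => x.1 ⊆ y.1 ∧ x ≠ y
  | PPi, x, y => y.1 ⊆ x.1 ∧ x ≠ y
  | EQ, x, y => x = y

/-- Converse of a basic RCC5 relation. -/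
def conv : RCC5Basic → RCC5Basic
  | DR => DR | PO => PO | PP => PPi | PPi => PP | EQ => EQ

end RCC5Basic

/-- An RCC5 relation is a union of basic relations, identified with a subset of `B₅`. -/
abbrev RCC5Rel : Type := Set RCC5Basic

namespace RCC5Rel

/-- A pair of regions is an instance of an RCC5 relation iff it is an instance of one of
its basic relations. -/
def interp (R : RCC5Rel) (x y : Region) : Prop := ∃ b ∈ R, RCC5Basic.interp b x y

/-- Converse of an RCC5 relation. -/
def conv (R : RCC5Rel) : RCC5Rel := {b | RCC5Basic.conv b ∈ R}

/-- Weak composition: `γ ∈ R ⋄ S` iff `γ` intersects the relational composition `R ∘ S`. -/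
def comp (R S : RCC5Rel) : RCC5Rel :=
  {γ | ∃ x z : Region, RCC5Basic.interp γ x z ∧
        ∃ y : Region, RCC5Rel.interp R x y ∧ RCC5Rel.interp S y z}

lemma conv_univ : RCC5Rel.conv Set.univ = Set.univ := by
  ext b; simp [RCC5Rel.conv]

end RCC5Rel

/-- A distributive subalgebra of RCC5: contains all basic relations, is closed under
converse, weak composition and (nonempty) intersection, and weak composition distributes
over nonempty intersections. -/
def IsDistributiveSubalgebra (𝒮 : Set RCC5Rel) : Prop :=
  (∀ b : RCC5Basic, ({b} : RCC5Rel) ∈ 𝒮) ∧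
  (∀ R ∈ 𝒮, RCC5Rel.conv R ∈ 𝒮) ∧
  (∀ R ∈ 𝒮, ∀ S ∈ 𝒮, RCC5Rel.comp R S ∈ 𝒮) ∧
  (∀ R ∈ 𝒮, ∀ S ∈ 𝒮, (R ∩ S).Nonempty → R ∩ S ∈ 𝒮) ∧
  (∀ R ∈ 𝒮, ∀ T₁ ∈ 𝒮, ∀ T₂ ∈ 𝒮, (T₁ ∩ T₂).Nonempty →
    RCC5Rel.comp R (T₁ ∩ T₂) = RCC5Rel.comp R T₁ ∩ RCC5Rel.comp R T₂ ∧
    RCC5Rel.comp (T₁ ∩ T₂) R = RCC5Rel.comp T₁ R ∩ RCC5Rel.comp T₂ R)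

open RCC5Basic in
/-- The fourteen relations of `D⁵₁₄`. -/
def D514 : Set RCC5Rel :=
  { {DR}, {PO}, {PP}, {PPi}, {EQ},
    {PO, PP}, {PO, PPi}, {DR, PO},
    {DR, PO, PP}, {DR, PO, PPi}, {PO, PP, PPi, EQ},
    {DR, PO, PP, PPi, EQ},
    {PP, EQ}, {PPi, EQ} }

open RCC5Basic in
/-- The twenty relations of `D⁵₂₀`. -/
def D520 : Set RCC5Rel :=
  { {DR}, {PO}, {PP}, {PPi}, {EQ},
    {PO, PP}, {PO, PPi}, {DR, PO},
    {DR, PO, PP}, {DR, PO, PPi}, {PO, PP, PPi, EQ},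
    {DR, PO, PP, PPi, EQ},
    {PO, EQ}, {PO, PP, EQ}, {PO, PPi, EQ}, {PO, PP, PPi},
    {DR, PO, EQ}, {DR, PO, PP, EQ}, {DR, PO, PPi, EQ}, {DR, PO, PP, PPi} }

open Set in
noncomputable def reg (a b : ℝ) (h : a < b) : Region :=
  ⟨Icc a b ×ˢ Icc 0 1,
   ⟨⟨(a, 0), by simp [h.le]⟩,
    by rw [interior_prod_eq, interior_Icc, interior_Icc, closure_prod_eq,
           closure_Ioo h.ne, closure_Ioo (by norm_num : (0:ℝ) ≠ 1)]⟩⟩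

open Set

lemma reg_subset {a b c d : ℝ} (hab : a < b) (hcd : c < d) (h1 : c ≤ a) (h2 : b ≤ d) :
    (reg a b hab).1 ⊆ (reg c d hcd).1 :=
  Set.prod_mono (Icc_subset_Icc h1 h2) subset_rfl

lemma reg_mem {a b : ℝ} (hab : a < b) {t : ℝ} (h1 : a ≤ t) (h2 : t ≤ b) :
    ((t, 0) : ℝ × ℝ) ∈ (reg a b hab).1 := by
  constructor <;> simp [h1, h2]

lemma reg_not_mem {a b : ℝ} (hab : a < b) {t : ℝ} (h : t < a ∨ b < t) :
    ((t, 0) : ℝ × ℝ) ∉ (reg a b hab).1 := by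
  rcases h with h | h <;> intro hm <;> rcases hm with ⟨⟨h1, h2⟩, -⟩ <;> linarith

lemma reg_not_subset_left {a b c d : ℝ} (hab : a < b) (hcd : c < d) (h : a < c) :
    ¬ (reg a b hab).1 ⊆ (reg c d hcd).1 := fun hs =>
  reg_not_mem hcd (Or.inl h) (hs (reg_mem hab le_rfl hab.le))

lemma reg_not_subset_right {a b c d : ℝ} (hab : a < b) (hcd : c < d) (h : d < b) :
    ¬ (reg a b hab).1 ⊆ (reg c d hcd).1 := fun hs =>
  reg_not_mem hcd (Or.inr h) (hs (reg_mem hab hab.le le_rfl))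

lemma reg_ne_left {a b c d : ℝ} (hab : a < b) (hcd : c < d) (h : a < c) :
    reg a b hab ≠ reg c d hcd := fun he =>
  reg_not_subset_left hab hcd h (he ▸ subset_rfl)

lemma reg_ne_right {a b c d : ℝ} (hab : a < b) (hcd : c < d) (h : d < b) :
    reg a b hab ≠ reg c d hcd := fun he =>
  reg_not_subset_right hab hcd h (he ▸ subset_rfl)

lemma reg_O {a b c d : ℝ} (hab : a < b) (hcd : c < d) (e f : ℝ) (hef : e < f)
    (h1 : a ≤ e) (h2 : c ≤ e) (h3 : f ≤ b) (h4 : f ≤ d) :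
    Region.O (reg a b hab) (reg c d hcd) :=
  ⟨reg e f hef, reg_subset hef hab h1 h3, reg_subset hef hcd h2 h4⟩

lemma reg_not_O {a b c d : ℝ} (hab : a < b) (hcd : c < d) (h : b < c) :
    ¬ Region.O (reg a b hab) (reg c d hcd) := by
  rintro ⟨z, hz1, hz2⟩
  obtain ⟨p, hp⟩ := z.2.1
  obtain ⟨⟨-, h1⟩, -⟩ := hz1 hp
  obtain ⟨⟨h2, -⟩, -⟩ := hz2 hp
  linarith

lemma reg_not_O' {a b c d : ℝ} (hab : a < b) (hcd : c < d) (h : d < a) :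
    ¬ Region.O (reg a b hab) (reg c d hcd) := by
  rintro ⟨z, hz1, hz2⟩
  exact reg_not_O hcd hab h ⟨z, hz2, hz1⟩

open RCC5Basic

def tbl : RCC5Basic → RCC5Basic → RCC5Basic → Bool
  | DR, DR, _ => true
  | DR, PO, γ => γ = DR ∨ γ = PO ∨ γ = PP
  | DR, PP, γ => γ = DR ∨ γ = PO ∨ γ = PP
  | DR, PPi, γ => γ = DR
  | DR, EQ, γ => γ = DR
  | PO, DR, γ => γ = DR ∨ γ = PO ∨ γ = PPi
  | PO, PO, _ => true
  | PO, PP, γ => γ = PO ∨ γ = PP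
  | PO, PPi, γ => γ = DR ∨ γ = PO ∨ γ = PPi
  | PO, EQ, γ => γ = PO
  | PP, DR, γ => γ = DR
  | PP, PO, γ => γ = DR ∨ γ = PO ∨ γ = PP
  | PP, PP, γ => γ = PP
  | PP, PPi, _ => true
  | PP, EQ, γ => γ = PP
  | PPi, DR, γ => γ = DR ∨ γ = PO ∨ γ = PPi
  | PPi, PO, γ => γ = PO ∨ γ = PPi
  | PPi, PP, γ => γ = PO ∨ γ = PP ∨ γ = PPi ∨ γ = EQ
  | PPi, PPi, γ => γ = PPi
  | PPi, EQ, γ => γ = PPi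
  | EQ, c, γ => γ = c

namespace Region

lemma O_of_subset {x y : Region} (h : x.1 ⊆ y.1) : O x y := ⟨x, subset_rfl, h⟩
lemma O_of_subset' {x y : Region} (h : y.1 ⊆ x.1) : O x y := ⟨y, h, subset_rfl⟩
lemma O_self (x : Region) : O x x := ⟨x, subset_rfl, subset_rfl⟩
lemma ext' {x y : Region} (h1 : x.1 ⊆ y.1) (h2 : y.1 ⊆ x.1) : x = y :=
  Subtype.ext (subset_antisymm h1 h2)

end Region

open Region

/-- uniqueness / pairwise exclusivity of basic relations -/
lemma interp_unique {b γ : RCC5Basic} {x z : Region}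
    (hb : interp b x z) (hγ : interp γ x z) : γ = b := by
  cases b <;> cases γ <;> simp only [interp] at hb hγ <;> first
  | rfl
  | (exfalso; try subst hb
     try subst hγ
     first
      | exact hb hγ.1
      | exact hγ hb.1
      | exact hb (O_of_subset hγ.1)
      | exact hb (O_of_subset' hγ.1)
      | exact hb (O_self _)
      | exact hγ (O_of_subset hb.1)
      | exact hγ (O_of_subset' hb.1)
      | exact hγ (O_self _)
      | exact hb.2.1 hγ.1
      | exact hb.2.2 hγ.1
      | exact hγ.2.1 hb.1
      | exact hγ.2.2 hb.1
      | exact hb.2.1 subset_rfl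
      | exact hγ.2.1 subset_rfl
      | exact hb.2 rfl
      | exact hγ.2 rfl
      | exact hγ.2 (ext' hγ.1 hb.1)
      | exact hγ.2 (ext' hb.1 hγ.1)
      | exact hb.2 (ext' hγ.1 hb.1)
      | exact hb.2 (ext' hb.1 hγ.1))

lemma O_symm {x y : Region} (h : O x y) : O y x := let ⟨w, h1, h2⟩ := h; ⟨w, h2, h1⟩
lemma O_mono_right {x y z : Region} (h : O x y) (hyz : y.1 ⊆ z.1) : O x z :=
  let ⟨w, h1, h2⟩ := h; ⟨w, h1, h2.trans hyz⟩
lemma O_mono_left {x y z : Region} (h : O x y) (hxz : x.1 ⊆ z.1) : O z y :=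
  let ⟨w, h1, h2⟩ := h; ⟨w, h1.trans hxz, h2⟩

lemma mem3a {γ : RCC5Basic} {x z : Region} (h : ¬ z.1 ⊆ x.1) (hγ : interp γ x z) :
    γ = DR ∨ γ = PO ∨ γ = PP := by
  cases γ <;> simp only [interp] at hγ
  case DR => simp
  case PO => simp
  case PP => simp
  case PPi => exact absurd hγ.1 h
  case EQ => exact absurd (congrArg Subtype.val hγ).symm.subset h

lemma mem3b {γ : RCC5Basic} {x z : Region} (h : ¬ x.1 ⊆ z.1) (hγ : interp γ x z) :
    γ = DR ∨ γ = PO ∨ γ = PPi := by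
  cases γ <;> simp only [interp] at hγ
  case DR => simp
  case PO => simp
  case PPi => simp
  case PP => exact absurd hγ.1 h
  case EQ => exact absurd (congrArg Subtype.val hγ).subset h

lemma mem2a {γ : RCC5Basic} {x z : Region} (hO : Region.O x z) (h : ¬ z.1 ⊆ x.1)
    (hγ : interp γ x z) : γ = PO ∨ γ = PP := by
  rcases mem3a h hγ with rfl | h' | h'
  · exact absurd hO hγ
  · exact Or.inl h'
  · exact Or.inr h'

lemma mem2b {γ : RCC5Basic} {x z : Region} (hO : Region.O x z) (h : ¬ x.1 ⊆ z.1)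
    (hγ : interp γ x z) : γ = PO ∨ γ = PPi := by
  rcases mem3b h hγ with rfl | h' | h'
  · exact absurd hO hγ
  · exact Or.inl h'
  · exact Or.inr h'

lemma mem4 {γ : RCC5Basic} {x z : Region} (hO : Region.O x z)
    (hγ : interp γ x z) : γ = PO ∨ γ = PP ∨ γ = PPi ∨ γ = EQ := by
  cases γ <;> first
    | exact absurd hO hγ
    | simp

lemma tbl_sound (b c γ : RCC5Basic) (x y z : Region)
    (hb : interp b x y) (hc : interp c y z) (hγ : interp γ x z) : tbl b c γ = true := by
  cases b <;> cases c <;> simp only [interp] at hb hc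
  case DR.DR => rfl
  case DR.PO =>
    have h : ¬ z.1 ⊆ x.1 := fun hs =>
      hb (let ⟨w, h1, h2⟩ := hc.1; ⟨w, h2.trans hs, h1⟩)
    rcases mem3a h hγ with rfl | rfl | rfl <;> rfl
  case DR.PP =>
    have h : ¬ z.1 ⊆ x.1 := fun hs => hb ⟨y, hc.1.trans hs, subset_rfl⟩
    rcases mem3a h hγ with rfl | rfl | rfl <;> rfl
  case DR.PPi =>
    have h : ¬ Region.O x z := fun ⟨w, h1, h2⟩ => hb ⟨w, h1, h2.trans hc.1⟩
    rw [interp_unique (b := DR) h hγ]; rfl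
  case DR.EQ => rw [interp_unique (b := DR) (hc ▸ hb) hγ]; rfl
  case PO.DR =>
    have h : ¬ x.1 ⊆ z.1 := fun hs =>
      hc (let ⟨w, h1, h2⟩ := hb.1; ⟨w, h2, h1.trans hs⟩)
    rcases mem3b h hγ with rfl | rfl | rfl <;> rfl
  case PO.PO => rfl
  case PO.PP =>
    have hO : Region.O x z := O_mono_right hb.1 hc.1
    have h : ¬ z.1 ⊆ x.1 := fun hs => hb.2.2 (hc.1.trans hs)
    rcases mem2a hO h hγ with rfl | rfl <;> rfl
  case PO.PPi =>
    have h : ¬ x.1 ⊆ z.1 := fun hs => hb.2.1 (hs.trans hc.1)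
    rcases mem3b h hγ with rfl | rfl | rfl <;> rfl
  case PO.EQ =>
    rw [interp_unique (b := PO) (hc ▸ hb) hγ]; rfl
  case PP.DR =>
    have h : ¬ Region.O x z := fun ⟨w, h1, h2⟩ => hc ⟨w, h1.trans hb.1, h2⟩
    rw [interp_unique (b := DR) h hγ]; rfl
  case PP.PO =>
    have h : ¬ z.1 ⊆ x.1 := fun hs => hc.2.2 (hs.trans hb.1)
    rcases mem3a h hγ with rfl | rfl | rfl <;> rfl
  case PP.PP =>
    have h : interp PP x z := ⟨hb.1.trans hc.1, fun he =>
      hb.2 (ext' hb.1 (hc.1.trans (he ▸ subset_rfl : z.1 ⊆ x.1)))⟩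
    rw [interp_unique h hγ]; rfl
  case PP.PPi => rfl
  case PP.EQ => rw [interp_unique (b := PP) (hc ▸ hb) hγ]; rfl
  case PPi.DR =>
    have h : ¬ x.1 ⊆ z.1 := fun hs => hc ⟨y, subset_rfl, hb.1.trans hs⟩
    rcases mem3b h hγ with rfl | rfl | rfl <;> rfl
  case PPi.PO =>
    have hO : Region.O x z := let ⟨w, h1, h2⟩ := hc.1; ⟨w, h1.trans hb.1, h2⟩
    have h : ¬ x.1 ⊆ z.1 := fun hs => hc.2.1 (hb.1.trans hs)
    rcases mem2b hO h hγ with rfl | rfl <;> rfl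
  case PPi.PP =>
    have hO : Region.O x z := ⟨y, hb.1, hc.1⟩
    rcases mem4 hO hγ with rfl | rfl | rfl | rfl <;> rfl
  case PPi.PPi =>
    have h : interp PPi x z := ⟨hc.1.trans hb.1, fun he =>
      hb.2 (ext' ((he ▸ subset_rfl : x.1 ⊆ z.1).trans hc.1) hb.1)⟩
    rw [interp_unique h hγ]; rfl
  case PPi.EQ => rw [interp_unique (b := PPi) (hc ▸ hb) hγ]; rfl
  case EQ.DR => rw [interp_unique (b := DR) (hb ▸ hc) hγ]; rfl
  case EQ.PO => rw [interp_unique (b := PO) (hb ▸ hc) hγ]; rfl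
  case EQ.PP => rw [interp_unique (b := PP) (hb ▸ hc) hγ]; rfl
  case EQ.PPi => rw [interp_unique (b := PPi) (hb ▸ hc) hγ]; rfl
  case EQ.EQ => rw [interp_unique (b := EQ) (hb ▸ hc) hγ]; rfl

lemma tbl_complete : ∀ b c γ : RCC5Basic, tbl b c γ = true →
    ∃ x y z : Region, interp b x y ∧ interp c y z ∧ interp γ x z
  | .DR, .DR, .DR, _ => ⟨reg 0 1 (by norm_num), reg 2 3 (by norm_num), reg 4 5 (by norm_num), reg_not_O _ _ (by norm_num), reg_not_O _ _ (by norm_num), reg_not_O _ _ (by norm_num)⟩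
  | .DR, .DR, .PO, _ => ⟨reg 0 2 (by norm_num), reg 4 5 (by norm_num), reg 1 3 (by norm_num), reg_not_O _ _ (by norm_num), reg_not_O' _ _ (by norm_num), ⟨reg_O _ _ 1 2 (by norm_num) (by norm_num) (by norm_num) (by norm_num) (by norm_num), reg_not_subset_left _ _ (by norm_num), reg_not_subset_right _ _ (by norm_num)⟩⟩
  | .DR, .DR, .PP, _ => ⟨reg 1 2 (by norm_num), reg 4 5 (by norm_num), reg 0 3 (by norm_num), reg_not_O _ _ (by norm_num), reg_not_O' _ _ (by norm_num), ⟨reg_subset _ _ (by norm_num) (by norm_num), (reg_ne_left _ _ (by norm_num)).symm⟩⟩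
  | .DR, .DR, .PPi, _ => ⟨reg 0 3 (by norm_num), reg 4 5 (by norm_num), reg 1 2 (by norm_num), reg_not_O _ _ (by norm_num), reg_not_O' _ _ (by norm_num), ⟨reg_subset _ _ (by norm_num) (by norm_num), reg_ne_left _ _ (by norm_num)⟩⟩
  | .DR, .DR, .EQ, _ => ⟨reg 0 1 (by norm_num), reg 2 3 (by norm_num), reg 0 1 (by norm_num), reg_not_O _ _ (by norm_num), reg_not_O' _ _ (by norm_num), rfl⟩
  | .DR, .PO, .DR, _ => ⟨reg 0 1 (by norm_num), reg 2 4 (by norm_num), reg 3 5 (by norm_num), reg_not_O _ _ (by norm_num), ⟨reg_O _ _ 3 4 (by norm_num) (by norm_num) (by norm_num) (by norm_num) (by norm_num), reg_not_subset_left _ _ (by norm_num), reg_not_subset_right _ _ (by norm_num)⟩, reg_not_O _ _ (by norm_num)⟩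
  | .DR, .PO, .PO, _ => ⟨reg 0 2 (by norm_num), reg 4 6 (by norm_num), reg 1 5 (by norm_num), reg_not_O _ _ (by norm_num), ⟨reg_O _ _ 4 5 (by norm_num) (by norm_num) (by norm_num) (by norm_num) (by norm_num), reg_not_subset_right _ _ (by norm_num), reg_not_subset_left _ _ (by norm_num)⟩, ⟨reg_O _ _ 1 2 (by norm_num) (by norm_num) (by norm_num) (by norm_num) (by norm_num), reg_not_subset_left _ _ (by norm_num), reg_not_subset_right _ _ (by norm_num)⟩⟩
  | .DR, .PO, .PP, _ => ⟨reg 1 2 (by norm_num), reg 4 6 (by norm_num), reg 0 5 (by norm_num), reg_not_O _ _ (by norm_num), ⟨reg_O _ _ 4 5 (by norm_num) (by norm_num) (by norm_num) (by norm_num) (by norm_num), reg_not_subset_right _ _ (by norm_num), reg_not_subset_left _ _ (by norm_num)⟩, ⟨reg_subset _ _ (by norm_num) (by norm_num), (reg_ne_left _ _ (by norm_num)).symm⟩⟩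
  | .DR, .PO, .PPi, h => absurd h (by decide)
  | .DR, .PO, .EQ, h => absurd h (by decide)
  | .DR, .PP, .DR, _ => ⟨reg 0 1 (by norm_num), reg 3 4 (by norm_num), reg 2 5 (by norm_num), reg_not_O _ _ (by norm_num), ⟨reg_subset _ _ (by norm_num) (by norm_num), (reg_ne_left _ _ (by norm_num)).symm⟩, reg_not_O _ _ (by norm_num)⟩
  | .DR, .PP, .PO, _ => ⟨reg 0 3 (by norm_num), reg 4 5 (by norm_num), reg 2 6 (by norm_num), reg_not_O _ _ (by norm_num), ⟨reg_subset _ _ (by norm_num) (by norm_num), (reg_ne_left _ _ (by norm_num)).symm⟩, ⟨reg_O _ _ 2 3 (by norm_num) (by norm_num) (by norm_num) (by norm_num) (by norm_num), reg_not_subset_left _ _ (by norm_num), reg_not_subset_right _ _ (by norm_num)⟩⟩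
  | .DR, .PP, .PP, _ => ⟨reg 1 2 (by norm_num), reg 4 5 (by norm_num), reg 0 6 (by norm_num), reg_not_O _ _ (by norm_num), ⟨reg_subset _ _ (by norm_num) (by norm_num), (reg_ne_left _ _ (by norm_num)).symm⟩, ⟨reg_subset _ _ (by norm_num) (by norm_num), (reg_ne_left _ _ (by norm_num)).symm⟩⟩
  | .DR, .PP, .PPi, h => absurd h (by decide)
  | .DR, .PP, .EQ, h => absurd h (by decide)
  | .DR, .PPi, .DR, _ => ⟨reg 0 1 (by norm_num), reg 2 5 (by norm_num), reg 3 4 (by norm_num), reg_not_O _ _ (by norm_num), ⟨reg_subset _ _ (by norm_num) (by norm_num), reg_ne_left _ _ (by norm_num)⟩, reg_not_O _ _ (by norm_num)⟩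
  | .DR, .PPi, .PO, h => absurd h (by decide)
  | .DR, .PPi, .PP, h => absurd h (by decide)
  | .DR, .PPi, .PPi, h => absurd h (by decide)
  | .DR, .PPi, .EQ, h => absurd h (by decide)
  | .DR, .EQ, .DR, _ => ⟨reg 0 1 (by norm_num), reg 2 3 (by norm_num), reg 2 3 (by norm_num), reg_not_O _ _ (by norm_num), rfl, reg_not_O _ _ (by norm_num)⟩
  | .DR, .EQ, .PO, h => absurd h (by decide)
  | .DR, .EQ, .PP, h => absurd h (by decide)
  | .DR, .EQ, .PPi, h => absurd h (by decide)
  | .DR, .EQ, .EQ, h => absurd h (by decide)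
  | .PO, .DR, .DR, _ => ⟨reg 0 2 (by norm_num), reg 1 3 (by norm_num), reg 4 5 (by norm_num), ⟨reg_O _ _ 1 2 (by norm_num) (by norm_num) (by norm_num) (by norm_num) (by norm_num), reg_not_subset_left _ _ (by norm_num), reg_not_subset_right _ _ (by norm_num)⟩, reg_not_O _ _ (by norm_num), reg_not_O _ _ (by norm_num)⟩
  | .PO, .DR, .PO, _ => ⟨reg 1 4 (by norm_num), reg 0 2 (by norm_num), reg 3 6 (by norm_num), ⟨reg_O _ _ 1 2 (by norm_num) (by norm_num) (by norm_num) (by norm_num) (by norm_num), reg_not_subset_right _ _ (by norm_num), reg_not_subset_left _ _ (by norm_num)⟩, reg_not_O _ _ (by norm_num), ⟨reg_O _ _ 3 4 (by norm_num) (by norm_num) (by norm_num) (by norm_num) (by norm_num), reg_not_subset_left _ _ (by norm_num), reg_not_subset_right _ _ (by norm_num)⟩⟩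
  | .PO, .DR, .PP, h => absurd h (by decide)
  | .PO, .DR, .PPi, _ => ⟨reg 0 4 (by norm_num), reg 3 6 (by norm_num), reg 1 2 (by norm_num), ⟨reg_O _ _ 3 4 (by norm_num) (by norm_num) (by norm_num) (by norm_num) (by norm_num), reg_not_subset_left _ _ (by norm_num), reg_not_subset_right _ _ (by norm_num)⟩, reg_not_O' _ _ (by norm_num), ⟨reg_subset _ _ (by norm_num) (by norm_num), reg_ne_left _ _ (by norm_num)⟩⟩
  | .PO, .DR, .EQ, h => absurd h (by decide)
  | .PO, .PO, .DR, _ => ⟨reg 0 2 (by norm_num), reg 1 5 (by norm_num), reg 4 6 (by norm_num), ⟨reg_O _ _ 1 2 (by norm_num) (by norm_num) (by norm_num) (by norm_num) (by norm_num), reg_not_subset_left _ _ (by norm_num), reg_not_subset_right _ _ (by norm_num)⟩, ⟨reg_O _ _ 4 5 (by norm_num) (by norm_num) (by norm_num) (by norm_num) (by norm_num), reg_not_subset_left _ _ (by norm_num), reg_not_subset_right _ _ (by norm_num)⟩, reg_not_O _ _ (by norm_num)⟩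
  | .PO, .PO, .PO, _ => ⟨reg 0 3 (by norm_num), reg 2 6 (by norm_num), reg 1 4 (by norm_num), ⟨reg_O _ _ 2 3 (by norm_num) (by norm_num) (by norm_num) (by norm_num) (by norm_num), reg_not_subset_left _ _ (by norm_num), reg_not_subset_right _ _ (by norm_num)⟩, ⟨reg_O _ _ 2 4 (by norm_num) (by norm_num) (by norm_num) (by norm_num) (by norm_num), reg_not_subset_right _ _ (by norm_num), reg_not_subset_left _ _ (by norm_num)⟩, ⟨reg_O _ _ 1 3 (by norm_num) (by norm_num) (by norm_num) (by norm_num) (by norm_num), reg_not_subset_left _ _ (by norm_num), reg_not_subset_right _ _ (by norm_num)⟩⟩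
  | .PO, .PO, .PP, _ => ⟨reg 4 6 (by norm_num), reg 5 10 (by norm_num), reg 2 8 (by norm_num), ⟨reg_O _ _ 5 6 (by norm_num) (by norm_num) (by norm_num) (by norm_num) (by norm_num), reg_not_subset_left _ _ (by norm_num), reg_not_subset_right _ _ (by norm_num)⟩, ⟨reg_O _ _ 5 8 (by norm_num) (by norm_num) (by norm_num) (by norm_num) (by norm_num), reg_not_subset_right _ _ (by norm_num), reg_not_subset_left _ _ (by norm_num)⟩, ⟨reg_subset _ _ (by norm_num) (by norm_num), (reg_ne_left _ _ (by norm_num)).symm⟩⟩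
  | .PO, .PO, .PPi, _ => ⟨reg 2 8 (by norm_num), reg 5 10 (by norm_num), reg 4 6 (by norm_num), ⟨reg_O _ _ 5 8 (by norm_num) (by norm_num) (by norm_num) (by norm_num) (by norm_num), reg_not_subset_left _ _ (by norm_num), reg_not_subset_right _ _ (by norm_num)⟩, ⟨reg_O _ _ 5 6 (by norm_num) (by norm_num) (by norm_num) (by norm_num) (by norm_num), reg_not_subset_right _ _ (by norm_num), reg_not_subset_left _ _ (by norm_num)⟩, ⟨reg_subset _ _ (by norm_num) (by norm_num), reg_ne_left _ _ (by norm_num)⟩⟩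
  | .PO, .PO, .EQ, _ => ⟨reg 0 2 (by norm_num), reg 1 3 (by norm_num), reg 0 2 (by norm_num), ⟨reg_O _ _ 1 2 (by norm_num) (by norm_num) (by norm_num) (by norm_num) (by norm_num), reg_not_subset_left _ _ (by norm_num), reg_not_subset_right _ _ (by norm_num)⟩, ⟨reg_O _ _ 1 2 (by norm_num) (by norm_num) (by norm_num) (by norm_num) (by norm_num), reg_not_subset_right _ _ (by norm_num), reg_not_subset_left _ _ (by norm_num)⟩, rfl⟩
  | .PO, .PP, .DR, h => absurd h (by decide)
  | .PO, .PP, .PO, _ => ⟨reg 0 2 (by norm_num), reg 1 3 (by norm_num), reg 1 4 (by norm_num), ⟨reg_O _ _ 1 2 (by norm_num) (by norm_num) (by norm_num) (by norm_num) (by norm_num), reg_not_subset_left _ _ (by norm_num), reg_not_subset_right _ _ (by norm_num)⟩, ⟨reg_subset _ _ (by norm_num) (by norm_num), (reg_ne_right _ _ (by norm_num)).symm⟩, ⟨reg_O _ _ 1 2 (by norm_num) (by norm_num) (by norm_num) (by norm_num) (by norm_num), reg_not_subset_left _ _ (by norm_num), reg_not_subset_right _ _ (by norm_num)⟩⟩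
  | .PO, .PP, .PP, _ => ⟨reg 0 2 (by norm_num), reg 1 3 (by norm_num), reg (-1) 4 (by norm_num), ⟨reg_O _ _ 1 2 (by norm_num) (by norm_num) (by norm_num) (by norm_num) (by norm_num), reg_not_subset_left _ _ (by norm_num), reg_not_subset_right _ _ (by norm_num)⟩, ⟨reg_subset _ _ (by norm_num) (by norm_num), (reg_ne_left _ _ (by norm_num)).symm⟩, ⟨reg_subset _ _ (by norm_num) (by norm_num), (reg_ne_left _ _ (by norm_num)).symm⟩⟩
  | .PO, .PP, .PPi, h => absurd h (by decide)
  | .PO, .PP, .EQ, h => absurd h (by decide)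
  | .PO, .PPi, .DR, _ => ⟨reg 0 2 (by norm_num), reg 1 5 (by norm_num), reg 3 4 (by norm_num), ⟨reg_O _ _ 1 2 (by norm_num) (by norm_num) (by norm_num) (by norm_num) (by norm_num), reg_not_subset_left _ _ (by norm_num), reg_not_subset_right _ _ (by norm_num)⟩, ⟨reg_subset _ _ (by norm_num) (by norm_num), reg_ne_left _ _ (by norm_num)⟩, reg_not_O _ _ (by norm_num)⟩
  | .PO, .PPi, .PO, _ => ⟨reg 0 3 (by norm_num), reg 1 5 (by norm_num), reg 2 4 (by norm_num), ⟨reg_O _ _ 1 3 (by norm_num) (by norm_num) (by norm_num) (by norm_num) (by norm_num), reg_not_subset_left _ _ (by norm_num), reg_not_subset_right _ _ (by norm_num)⟩, ⟨reg_subset _ _ (by norm_num) (by norm_num), reg_ne_left _ _ (by norm_num)⟩, ⟨reg_O _ _ 2 3 (by norm_num) (by norm_num) (by norm_num) (by norm_num) (by norm_num), reg_not_subset_left _ _ (by norm_num), reg_not_subset_right _ _ (by norm_num)⟩⟩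
  | .PO, .PPi, .PP, h => absurd h (by decide)
  | .PO, .PPi, .PPi, _ => ⟨reg 0 8 (by norm_num), reg 4 12 (by norm_num), reg 5 6 (by norm_num), ⟨reg_O _ _ 4 8 (by norm_num) (by norm_num) (by norm_num) (by norm_num) (by norm_num), reg_not_subset_left _ _ (by norm_num), reg_not_subset_right _ _ (by norm_num)⟩, ⟨reg_subset _ _ (by norm_num) (by norm_num), reg_ne_left _ _ (by norm_num)⟩, ⟨reg_subset _ _ (by norm_num) (by norm_num), reg_ne_left _ _ (by norm_num)⟩⟩
  | .PO, .PPi, .EQ, h => absurd h (by decide)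
  | .PO, .EQ, .DR, h => absurd h (by decide)
  | .PO, .EQ, .PO, _ => ⟨reg 0 2 (by norm_num), reg 1 3 (by norm_num), reg 1 3 (by norm_num), ⟨reg_O _ _ 1 2 (by norm_num) (by norm_num) (by norm_num) (by norm_num) (by norm_num), reg_not_subset_left _ _ (by norm_num), reg_not_subset_right _ _ (by norm_num)⟩, rfl, ⟨reg_O _ _ 1 2 (by norm_num) (by norm_num) (by norm_num) (by norm_num) (by norm_num), reg_not_subset_left _ _ (by norm_num), reg_not_subset_right _ _ (by norm_num)⟩⟩
  | .PO, .EQ, .PP, h => absurd h (by decide)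
  | .PO, .EQ, .PPi, h => absurd h (by decide)
  | .PO, .EQ, .EQ, h => absurd h (by decide)
  | .PP, .DR, .DR, _ => ⟨reg 0 1 (by norm_num), reg (-1) 2 (by norm_num), reg 3 4 (by norm_num), ⟨reg_subset _ _ (by norm_num) (by norm_num), (reg_ne_left _ _ (by norm_num)).symm⟩, reg_not_O _ _ (by norm_num), reg_not_O _ _ (by norm_num)⟩
  | .PP, .DR, .PO, h => absurd h (by decide)
  | .PP, .DR, .PP, h => absurd h (by decide)
  | .PP, .DR, .PPi, h => absurd h (by decide)
  | .PP, .DR, .EQ, h => absurd h (by decide)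
  | .PP, .PO, .DR, _ => ⟨reg 0 1 (by norm_num), reg 0 3 (by norm_num), reg 2 4 (by norm_num), ⟨reg_subset _ _ (by norm_num) (by norm_num), (reg_ne_right _ _ (by norm_num)).symm⟩, ⟨reg_O _ _ 2 3 (by norm_num) (by norm_num) (by norm_num) (by norm_num) (by norm_num), reg_not_subset_left _ _ (by norm_num), reg_not_subset_right _ _ (by norm_num)⟩, reg_not_O _ _ (by norm_num)⟩
  | .PP, .PO, .PO, _ => ⟨reg 0 2 (by norm_num), reg (-1) 3 (by norm_num), reg 1 4 (by norm_num), ⟨reg_subset _ _ (by norm_num) (by norm_num), (reg_ne_left _ _ (by norm_num)).symm⟩, ⟨reg_O _ _ 1 3 (by norm_num) (by norm_num) (by norm_num) (by norm_num) (by norm_num), reg_not_subset_left _ _ (by norm_num), reg_not_subset_right _ _ (by norm_num)⟩, ⟨reg_O _ _ 1 2 (by norm_num) (by norm_num) (by norm_num) (by norm_num) (by norm_num), reg_not_subset_left _ _ (by norm_num), reg_not_subset_right _ _ (by norm_num)⟩⟩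
  | .PP, .PO, .PP, _ => ⟨reg 2 4 (by norm_num), reg 0 6 (by norm_num), reg 1 8 (by norm_num), ⟨reg_subset _ _ (by norm_num) (by norm_num), (reg_ne_left _ _ (by norm_num)).symm⟩, ⟨reg_O _ _ 1 6 (by norm_num) (by norm_num) (by norm_num) (by norm_num) (by norm_num), reg_not_subset_left _ _ (by norm_num), reg_not_subset_right _ _ (by norm_num)⟩, ⟨reg_subset _ _ (by norm_num) (by norm_num), (reg_ne_left _ _ (by norm_num)).symm⟩⟩
  | .PP, .PO, .PPi, h => absurd h (by decide)
  | .PP, .PO, .EQ, h => absurd h (by decide)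
  | .PP, .PP, .DR, h => absurd h (by decide)
  | .PP, .PP, .PO, h => absurd h (by decide)
  | .PP, .PP, .PP, _ => ⟨reg 0 1 (by norm_num), reg (-1) 2 (by norm_num), reg (-2) 3 (by norm_num), ⟨reg_subset _ _ (by norm_num) (by norm_num), (reg_ne_left _ _ (by norm_num)).symm⟩, ⟨reg_subset _ _ (by norm_num) (by norm_num), (reg_ne_left _ _ (by norm_num)).symm⟩, ⟨reg_subset _ _ (by norm_num) (by norm_num), (reg_ne_left _ _ (by norm_num)).symm⟩⟩
  | .PP, .PP, .PPi, h => absurd h (by decide)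
  | .PP, .PP, .EQ, h => absurd h (by decide)
  | .PP, .PPi, .DR, _ => ⟨reg 0 1 (by norm_num), reg 0 5 (by norm_num), reg 3 4 (by norm_num), ⟨reg_subset _ _ (by norm_num) (by norm_num), (reg_ne_right _ _ (by norm_num)).symm⟩, ⟨reg_subset _ _ (by norm_num) (by norm_num), reg_ne_left _ _ (by norm_num)⟩, reg_not_O _ _ (by norm_num)⟩
  | .PP, .PPi, .PO, _ => ⟨reg 0 2 (by norm_num), reg 0 5 (by norm_num), reg 1 3 (by norm_num), ⟨reg_subset _ _ (by norm_num) (by norm_num), (reg_ne_right _ _ (by norm_num)).symm⟩, ⟨reg_subset _ _ (by norm_num) (by norm_num), reg_ne_left _ _ (by norm_num)⟩, ⟨reg_O _ _ 1 2 (by norm_num) (by norm_num) (by norm_num) (by norm_num) (by norm_num), reg_not_subset_left _ _ (by norm_num), reg_not_subset_right _ _ (by norm_num)⟩⟩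
  | .PP, .PPi, .PP, _ => ⟨reg 1 2 (by norm_num), reg 0 5 (by norm_num), reg 0 3 (by norm_num), ⟨reg_subset _ _ (by norm_num) (by norm_num), (reg_ne_left _ _ (by norm_num)).symm⟩, ⟨reg_subset _ _ (by norm_num) (by norm_num), reg_ne_right _ _ (by norm_num)⟩, ⟨reg_subset _ _ (by norm_num) (by norm_num), (reg_ne_left _ _ (by norm_num)).symm⟩⟩
  | .PP, .PPi, .PPi, _ => ⟨reg 0 3 (by norm_num), reg 0 5 (by norm_num), reg 1 2 (by norm_num), ⟨reg_subset _ _ (by norm_num) (by norm_num), (reg_ne_right _ _ (by norm_num)).symm⟩, ⟨reg_subset _ _ (by norm_num) (by norm_num), reg_ne_left _ _ (by norm_num)⟩, ⟨reg_subset _ _ (by norm_num) (by norm_num), reg_ne_left _ _ (by norm_num)⟩⟩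
  | .PP, .PPi, .EQ, _ => ⟨reg 0 1 (by norm_num), reg (-1) 2 (by norm_num), reg 0 1 (by norm_num), ⟨reg_subset _ _ (by norm_num) (by norm_num), (reg_ne_left _ _ (by norm_num)).symm⟩, ⟨reg_subset _ _ (by norm_num) (by norm_num), reg_ne_left _ _ (by norm_num)⟩, rfl⟩
  | .PP, .EQ, .DR, h => absurd h (by decide)
  | .PP, .EQ, .PO, h => absurd h (by decide)
  | .PP, .EQ, .PP, _ => ⟨reg 0 1 (by norm_num), reg (-1) 2 (by norm_num), reg (-1) 2 (by norm_num), ⟨reg_subset _ _ (by norm_num) (by norm_num), (reg_ne_left _ _ (by norm_num)).symm⟩, rfl, ⟨reg_subset _ _ (by norm_num) (by norm_num), (reg_ne_left _ _ (by norm_num)).symm⟩⟩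
  | .PP, .EQ, .PPi, h => absurd h (by decide)
  | .PP, .EQ, .EQ, h => absurd h (by decide)
  | .PPi, .DR, .DR, _ => ⟨reg 0 2 (by norm_num), reg 0 1 (by norm_num), reg 3 4 (by norm_num), ⟨reg_subset _ _ (by norm_num) (by norm_num), reg_ne_right _ _ (by norm_num)⟩, reg_not_O _ _ (by norm_num), reg_not_O _ _ (by norm_num)⟩
  | .PPi, .DR, .PO, _ => ⟨reg 0 4 (by norm_num), reg 0 2 (by norm_num), reg 3 6 (by norm_num), ⟨reg_subset _ _ (by norm_num) (by norm_num), reg_ne_right _ _ (by norm_num)⟩, reg_not_O _ _ (by norm_num), ⟨reg_O _ _ 3 4 (by norm_num) (by norm_num) (by norm_num) (by norm_num) (by norm_num), reg_not_subset_left _ _ (by norm_num), reg_not_subset_right _ _ (by norm_num)⟩⟩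
  | .PPi, .DR, .PP, h => absurd h (by decide)
  | .PPi, .DR, .PPi, _ => ⟨reg 0 4 (by norm_num), reg 0 1 (by norm_num), reg 2 3 (by norm_num), ⟨reg_subset _ _ (by norm_num) (by norm_num), reg_ne_right _ _ (by norm_num)⟩, reg_not_O _ _ (by norm_num), ⟨reg_subset _ _ (by norm_num) (by norm_num), reg_ne_left _ _ (by norm_num)⟩⟩
  | .PPi, .DR, .EQ, h => absurd h (by decide)
  | .PPi, .PO, .DR, h => absurd h (by decide)
  | .PPi, .PO, .PO, _ => ⟨reg 0 3 (by norm_num), reg 0 2 (by norm_num), reg 1 4 (by norm_num), ⟨reg_subset _ _ (by norm_num) (by norm_num), reg_ne_right _ _ (by norm_num)⟩, ⟨reg_O _ _ 1 2 (by norm_num) (by norm_num) (by norm_num) (by norm_num) (by norm_num), reg_not_subset_left _ _ (by norm_num), reg_not_subset_right _ _ (by norm_num)⟩, ⟨reg_O _ _ 1 3 (by norm_num) (by norm_num) (by norm_num) (by norm_num) (by norm_num), reg_not_subset_left _ _ (by norm_num), reg_not_subset_right _ _ (by norm_num)⟩⟩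
  | .PPi, .PO, .PP, h => absurd h (by decide)
  | .PPi, .PO, .PPi, _ => ⟨reg 0 6 (by norm_num), reg 0 2 (by norm_num), reg 1 3 (by norm_num), ⟨reg_subset _ _ (by norm_num) (by norm_num), reg_ne_right _ _ (by norm_num)⟩, ⟨reg_O _ _ 1 2 (by norm_num) (by norm_num) (by norm_num) (by norm_num) (by norm_num), reg_not_subset_left _ _ (by norm_num), reg_not_subset_right _ _ (by norm_num)⟩, ⟨reg_subset _ _ (by norm_num) (by norm_num), reg_ne_left _ _ (by norm_num)⟩⟩
  | .PPi, .PO, .EQ, h => absurd h (by decide)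
  | .PPi, .PP, .DR, h => absurd h (by decide)
  | .PPi, .PP, .PO, _ => ⟨reg 0 3 (by norm_num), reg 1 2 (by norm_num), reg 1 4 (by norm_num), ⟨reg_subset _ _ (by norm_num) (by norm_num), reg_ne_left _ _ (by norm_num)⟩, ⟨reg_subset _ _ (by norm_num) (by norm_num), (reg_ne_right _ _ (by norm_num)).symm⟩, ⟨reg_O _ _ 1 3 (by norm_num) (by norm_num) (by norm_num) (by norm_num) (by norm_num), reg_not_subset_left _ _ (by norm_num), reg_not_subset_right _ _ (by norm_num)⟩⟩
  | .PPi, .PP, .PP, _ => ⟨reg 0 3 (by norm_num), reg 1 2 (by norm_num), reg (-1) 4 (by norm_num), ⟨reg_subset _ _ (by norm_num) (by norm_num), reg_ne_left _ _ (by norm_num)⟩, ⟨reg_subset _ _ (by norm_num) (by norm_num), (reg_ne_left _ _ (by norm_num)).symm⟩, ⟨reg_subset _ _ (by norm_num) (by norm_num), (reg_ne_left _ _ (by norm_num)).symm⟩⟩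
  | .PPi, .PP, .PPi, _ => ⟨reg (-1) 4 (by norm_num), reg 1 2 (by norm_num), reg 0 3 (by norm_num), ⟨reg_subset _ _ (by norm_num) (by norm_num), reg_ne_left _ _ (by norm_num)⟩, ⟨reg_subset _ _ (by norm_num) (by norm_num), (reg_ne_left _ _ (by norm_num)).symm⟩, ⟨reg_subset _ _ (by norm_num) (by norm_num), reg_ne_left _ _ (by norm_num)⟩⟩
  | .PPi, .PP, .EQ, _ => ⟨reg 0 3 (by norm_num), reg 1 2 (by norm_num), reg 0 3 (by norm_num), ⟨reg_subset _ _ (by norm_num) (by norm_num), reg_ne_left _ _ (by norm_num)⟩, ⟨reg_subset _ _ (by norm_num) (by norm_num), (reg_ne_left _ _ (by norm_num)).symm⟩, rfl⟩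
  | .PPi, .PPi, .DR, h => absurd h (by decide)
  | .PPi, .PPi, .PO, h => absurd h (by decide)
  | .PPi, .PPi, .PP, h => absurd h (by decide)
  | .PPi, .PPi, .PPi, _ => ⟨reg (-2) 3 (by norm_num), reg (-1) 2 (by norm_num), reg 0 1 (by norm_num), ⟨reg_subset _ _ (by norm_num) (by norm_num), reg_ne_left _ _ (by norm_num)⟩, ⟨reg_subset _ _ (by norm_num) (by norm_num), reg_ne_left _ _ (by norm_num)⟩, ⟨reg_subset _ _ (by norm_num) (by norm_num), reg_ne_left _ _ (by norm_num)⟩⟩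
  | .PPi, .PPi, .EQ, h => absurd h (by decide)
  | .PPi, .EQ, .DR, h => absurd h (by decide)
  | .PPi, .EQ, .PO, h => absurd h (by decide)
  | .PPi, .EQ, .PP, h => absurd h (by decide)
  | .PPi, .EQ, .PPi, _ => ⟨reg (-1) 2 (by norm_num), reg 0 1 (by norm_num), reg 0 1 (by norm_num), ⟨reg_subset _ _ (by norm_num) (by norm_num), reg_ne_left _ _ (by norm_num)⟩, rfl, ⟨reg_subset _ _ (by norm_num) (by norm_num), reg_ne_left _ _ (by norm_num)⟩⟩
  | .PPi, .EQ, .EQ, h => absurd h (by decide)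
  | .EQ, .DR, .DR, _ => ⟨reg 0 1 (by norm_num), reg 0 1 (by norm_num), reg 2 3 (by norm_num), rfl, reg_not_O _ _ (by norm_num), reg_not_O _ _ (by norm_num)⟩
  | .EQ, .DR, .PO, h => absurd h (by decide)
  | .EQ, .DR, .PP, h => absurd h (by decide)
  | .EQ, .DR, .PPi, h => absurd h (by decide)
  | .EQ, .DR, .EQ, h => absurd h (by decide)
  | .EQ, .PO, .DR, h => absurd h (by decide)
  | .EQ, .PO, .PO, _ => ⟨reg 0 2 (by norm_num), reg 0 2 (by norm_num), reg 1 3 (by norm_num), rfl, ⟨reg_O _ _ 1 2 (by norm_num) (by norm_num) (by norm_num) (by norm_num) (by norm_num), reg_not_subset_left _ _ (by norm_num), reg_not_subset_right _ _ (by norm_num)⟩, ⟨reg_O _ _ 1 2 (by norm_num) (by norm_num) (by norm_num) (by norm_num) (by norm_num), reg_not_subset_left _ _ (by norm_num), reg_not_subset_right _ _ (by norm_num)⟩⟩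
  | .EQ, .PO, .PP, h => absurd h (by decide)
  | .EQ, .PO, .PPi, h => absurd h (by decide)
  | .EQ, .PO, .EQ, h => absurd h (by decide)
  | .EQ, .PP, .DR, h => absurd h (by decide)
  | .EQ, .PP, .PO, h => absurd h (by decide)
  | .EQ, .PP, .PP, _ => ⟨reg 0 1 (by norm_num), reg 0 1 (by norm_num), reg (-1) 2 (by norm_num), rfl, ⟨reg_subset _ _ (by norm_num) (by norm_num), (reg_ne_left _ _ (by norm_num)).symm⟩, ⟨reg_subset _ _ (by norm_num) (by norm_num), (reg_ne_left _ _ (by norm_num)).symm⟩⟩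
  | .EQ, .PP, .PPi, h => absurd h (by decide)
  | .EQ, .PP, .EQ, h => absurd h (by decide)
  | .EQ, .PPi, .DR, h => absurd h (by decide)
  | .EQ, .PPi, .PO, h => absurd h (by decide)
  | .EQ, .PPi, .PP, h => absurd h (by decide)
  | .EQ, .PPi, .PPi, _ => ⟨reg (-1) 2 (by norm_num), reg (-1) 2 (by norm_num), reg 0 1 (by norm_num), rfl, ⟨reg_subset _ _ (by norm_num) (by norm_num), reg_ne_left _ _ (by norm_num)⟩, ⟨reg_subset _ _ (by norm_num) (by norm_num), reg_ne_left _ _ (by norm_num)⟩⟩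
  | .EQ, .PPi, .EQ, h => absurd h (by decide)
  | .EQ, .EQ, .DR, h => absurd h (by decide)
  | .EQ, .EQ, .PO, h => absurd h (by decide)
  | .EQ, .EQ, .PP, h => absurd h (by decide)
  | .EQ, .EQ, .PPi, h => absurd h (by decide)
  | .EQ, .EQ, .EQ, _ => ⟨reg 0 1 (by norm_num), reg 0 1 (by norm_num), reg 0 1 (by norm_num), rfl, rfl, rfl⟩

lemma comp_eq (R S : RCC5Rel) :
    RCC5Rel.comp R S = {γ | ∃ b ∈ R, ∃ c ∈ S, tbl b c γ = true} := by
  ext γ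
  constructor
  · rintro ⟨x, z, hg, y, ⟨b, hbR, hb⟩, c, hcS, hc⟩
    exact ⟨b, hbR, c, hcS, tbl_sound b c γ x y z hb hc hg⟩
  · rintro ⟨b, hbR, c, hcS, h⟩
    obtain ⟨x, y, z, hb, hc, hg⟩ := tbl_complete b c γ h
    exact ⟨x, z, hg, y, ⟨b, hbR, hb⟩, c, hcS, hc⟩

def allB : List RCC5Basic := [DR, PO, PP, PPi, EQ]

lemma mem_allB (b : RCC5Basic) : b ∈ allB := by cases b <;> simp [allB]

def toSet (r : RCC5Basic → Bool) : RCC5Rel := {b | r b = true}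

def mk (l : List RCC5Basic) : RCC5Basic → Bool := fun b => l.contains b

def compB (r s : RCC5Basic → Bool) : RCC5Basic → Bool :=
  fun γ => allB.any fun b => r b && allB.any fun c => s c && tbl b c γ

def convB (r : RCC5Basic → Bool) : RCC5Basic → Bool := fun b => r (RCC5Basic.conv b)

def interB (r s : RCC5Basic → Bool) : RCC5Basic → Bool := fun b => r b && s b

def beqB (r s : RCC5Basic → Bool) : Bool := allB.all fun b => r b == s b

def neB (r : RCC5Basic → Bool) : Bool := allB.any r

lemma toSet_eq {r s : RCC5Basic → Bool} (h : beqB r s = true) : toSet r = toSet s := by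
  ext b
  simp only [beqB, List.all_eq_true] at h
  have := h b (mem_allB b)
  simp only [beq_iff_eq] at this
  simp [toSet, this]

lemma comp_toSet (r s : RCC5Basic → Bool) :
    RCC5Rel.comp (toSet r) (toSet s) = toSet (compB r s) := by
  rw [comp_eq]
  ext γ
  simp only [Set.mem_setOf_eq, toSet, compB, List.any_eq_true, Bool.and_eq_true]
  constructor
  · rintro ⟨b, hb, c, hc, h⟩
    exact ⟨b, mem_allB b, hb, c, mem_allB c, hc, h⟩
  · rintro ⟨b, -, hb, c, -, hc, h⟩
    exact ⟨b, hb, c, hc, h⟩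

lemma conv_toSet (r : RCC5Basic → Bool) :
    RCC5Rel.conv (toSet r) = toSet (convB r) := rfl

lemma inter_toSet (r s : RCC5Basic → Bool) :
    toSet r ∩ toSet s = toSet (interB r s) := by
  ext b; simp [toSet, interB, Bool.and_eq_true]

lemma neB_of_nonempty {r : RCC5Basic → Bool} (h : (toSet r).Nonempty) : neB r = true := by
  obtain ⟨b, hb⟩ := h
  simp only [neB, List.any_eq_true]
  exact ⟨b, mem_allB b, hb⟩

open RCC5Basic in
def idx : RCC5Basic → Nat
  | DR => 0 | PO => 1 | PP => 2 | PPi => 3 | EQ => 4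

def fromN (n : Nat) : RCC5Basic → Bool := fun b => n.testBit (idx b)

def tblN : Nat → Nat → Nat
  | 0, 0 => 31
  | 0, 1 => 7
  | 0, 2 => 7
  | 0, 3 => 1
  | 0, 4 => 1
  | 1, 0 => 11
  | 1, 1 => 31
  | 1, 2 => 6
  | 1, 3 => 11
  | 1, 4 => 2
  | 2, 0 => 1
  | 2, 1 => 7
  | 2, 2 => 4
  | 2, 3 => 31
  | 2, 4 => 4
  | 3, 0 => 11
  | 3, 1 => 10
  | 3, 2 => 30
  | 3, 3 => 8
  | 3, 4 => 8
  | 4, 0 => 1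
  | 4, 1 => 2
  | 4, 2 => 4
  | 4, 3 => 8
  | 4, 4 => 16
  | _, _ => 0

def compN (m n : Nat) : Nat :=
  (List.range 5).foldl (fun acc b =>
    if m.testBit b then
      (List.range 5).foldl (fun acc c =>
        if n.testBit c then acc ||| tblN b c else acc) acc
    else acc) 0

def convN (m : Nat) : Nat :=
  (m &&& 19) ||| (if m.testBit 2 then 8 else 0) ||| (if m.testBit 3 then 4 else 0)

def N14 : List Nat := [1, 2, 4, 8, 16, 6, 10, 3, 7, 11, 30, 31, 20, 24]
def N20 : List Nat := [1, 2, 4, 8, 16, 6, 10, 3, 7, 11, 30, 31, 18, 22, 26, 14, 19, 23, 27, 15]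
def NB : List Nat := [1, 2, 3, 4, 6, 7, 8, 10, 11, 14, 15, 16, 18, 19, 20, 22, 23, 24, 26, 27, 30, 31]

set_option maxRecDepth 1000000 in
set_option maxHeartbeats 3000000 in
lemma bridgeB :
    (NB.all fun m => NB.all fun n =>
      beqB (compB (fromN m) (fromN n)) (fromN (compN m n)) &&
      beqB (convB (fromN m)) (fromN (convN m)) &&
      beqB (interB (fromN m) (fromN n)) (fromN (m &&& n))) = true := by decide

set_option maxRecDepth 1000000 in
set_option maxHeartbeats 3000000 in
lemma crunch14 :
    (N14.all fun r => N14.all fun s =>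
      decide (compN r s ∈ N14) && decide (convN r ∈ N14) && decide (r ∈ NB) &&
      (decide (r &&& s = 0) || decide ((r &&& s) ∈ N14))) = true := by decide

set_option maxRecDepth 1000000 in
set_option maxHeartbeats 3000000 in
lemma dist14 :
    (N14.all fun r => N14.all fun t1 => N14.all fun t2 =>
      decide (t1 &&& t2 = 0) ||
      (decide (compN r (t1 &&& t2) = (compN r t1 &&& compN r t2)) &&
       decide (compN (t1 &&& t2) r = (compN t1 r &&& compN t2 r)))) = true := by decide

set_option maxRecDepth 1000000 in
set_option maxHeartbeats 3000000 in
lemma crunch20 :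
    (N20.all fun r => N20.all fun s =>
      decide (compN r s ∈ N20) && decide (convN r ∈ N20) && decide (r ∈ NB) &&
      (decide (r &&& s = 0) || decide ((r &&& s) ∈ N20))) = true := by decide

set_option maxRecDepth 1000000 in
set_option maxHeartbeats 3000000 in
lemma dist20 :
    (N20.all fun r => N20.all fun t1 => N20.all fun t2 =>
      decide (t1 &&& t2 = 0) ||
      (decide (compN r (t1 &&& t2) = (compN r t1 &&& compN r t2)) &&
       decide (compN (t1 &&& t2) r = (compN t1 r &&& compN t2 r)))) = true := by decide
lemma lit1 : toSet (fromN 1) = ({DR} : RCC5Rel) := by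
  ext b; cases b <;> simp only [toSet, Set.mem_setOf_eq, Set.mem_insert_iff,
    Set.mem_singleton_iff] <;> decide
lemma lit2 : toSet (fromN 2) = ({PO} : RCC5Rel) := by
  ext b; cases b <;> simp only [toSet, Set.mem_setOf_eq, Set.mem_insert_iff,
    Set.mem_singleton_iff] <;> decide
lemma lit3 : toSet (fromN 3) = ({DR, PO} : RCC5Rel) := by
  ext b; cases b <;> simp only [toSet, Set.mem_setOf_eq, Set.mem_insert_iff,
    Set.mem_singleton_iff] <;> decide
lemma lit4 : toSet (fromN 4) = ({PP} : RCC5Rel) := by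
  ext b; cases b <;> simp only [toSet, Set.mem_setOf_eq, Set.mem_insert_iff,
    Set.mem_singleton_iff] <;> decide
lemma lit6 : toSet (fromN 6) = ({PO, PP} : RCC5Rel) := by
  ext b; cases b <;> simp only [toSet, Set.mem_setOf_eq, Set.mem_insert_iff,
    Set.mem_singleton_iff] <;> decide
lemma lit7 : toSet (fromN 7) = ({DR, PO, PP} : RCC5Rel) := by
  ext b; cases b <;> simp only [toSet, Set.mem_setOf_eq, Set.mem_insert_iff,
    Set.mem_singleton_iff] <;> decide
lemma lit8 : toSet (fromN 8) = ({PPi} : RCC5Rel) := by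
  ext b; cases b <;> simp only [toSet, Set.mem_setOf_eq, Set.mem_insert_iff,
    Set.mem_singleton_iff] <;> decide
lemma lit10 : toSet (fromN 10) = ({PO, PPi} : RCC5Rel) := by
  ext b; cases b <;> simp only [toSet, Set.mem_setOf_eq, Set.mem_insert_iff,
    Set.mem_singleton_iff] <;> decide
lemma lit11 : toSet (fromN 11) = ({DR, PO, PPi} : RCC5Rel) := by
  ext b; cases b <;> simp only [toSet, Set.mem_setOf_eq, Set.mem_insert_iff,
    Set.mem_singleton_iff] <;> decide
lemma lit14 : toSet (fromN 14) = ({PO, PP, PPi} : RCC5Rel) := by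
  ext b; cases b <;> simp only [toSet, Set.mem_setOf_eq, Set.mem_insert_iff,
    Set.mem_singleton_iff] <;> decide
lemma lit15 : toSet (fromN 15) = ({DR, PO, PP, PPi} : RCC5Rel) := by
  ext b; cases b <;> simp only [toSet, Set.mem_setOf_eq, Set.mem_insert_iff,
    Set.mem_singleton_iff] <;> decide
lemma lit16 : toSet (fromN 16) = ({EQ} : RCC5Rel) := by
  ext b; cases b <;> simp only [toSet, Set.mem_setOf_eq, Set.mem_insert_iff,
    Set.mem_singleton_iff] <;> decide
lemma lit18 : toSet (fromN 18) = ({PO, EQ} : RCC5Rel) := by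
  ext b; cases b <;> simp only [toSet, Set.mem_setOf_eq, Set.mem_insert_iff,
    Set.mem_singleton_iff] <;> decide
lemma lit19 : toSet (fromN 19) = ({DR, PO, EQ} : RCC5Rel) := by
  ext b; cases b <;> simp only [toSet, Set.mem_setOf_eq, Set.mem_insert_iff,
    Set.mem_singleton_iff] <;> decide
lemma lit20 : toSet (fromN 20) = ({PP, EQ} : RCC5Rel) := by
  ext b; cases b <;> simp only [toSet, Set.mem_setOf_eq, Set.mem_insert_iff,
    Set.mem_singleton_iff] <;> decide
lemma lit22 : toSet (fromN 22) = ({PO, PP, EQ} : RCC5Rel) := by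
  ext b; cases b <;> simp only [toSet, Set.mem_setOf_eq, Set.mem_insert_iff,
    Set.mem_singleton_iff] <;> decide
lemma lit23 : toSet (fromN 23) = ({DR, PO, PP, EQ} : RCC5Rel) := by
  ext b; cases b <;> simp only [toSet, Set.mem_setOf_eq, Set.mem_insert_iff,
    Set.mem_singleton_iff] <;> decide
lemma lit24 : toSet (fromN 24) = ({PPi, EQ} : RCC5Rel) := by
  ext b; cases b <;> simp only [toSet, Set.mem_setOf_eq, Set.mem_insert_iff,
    Set.mem_singleton_iff] <;> decide
lemma lit26 : toSet (fromN 26) = ({PO, PPi, EQ} : RCC5Rel) := by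
  ext b; cases b <;> simp only [toSet, Set.mem_setOf_eq, Set.mem_insert_iff,
    Set.mem_singleton_iff] <;> decide
lemma lit27 : toSet (fromN 27) = ({DR, PO, PPi, EQ} : RCC5Rel) := by
  ext b; cases b <;> simp only [toSet, Set.mem_setOf_eq, Set.mem_insert_iff,
    Set.mem_singleton_iff] <;> decide
lemma lit30 : toSet (fromN 30) = ({PO, PP, PPi, EQ} : RCC5Rel) := by
  ext b; cases b <;> simp only [toSet, Set.mem_setOf_eq, Set.mem_insert_iff,
    Set.mem_singleton_iff] <;> decide
lemma lit31 : toSet (fromN 31) = ({DR, PO, PP, PPi, EQ} : RCC5Rel) := by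
  ext b; cases b <;> simp only [toSet, Set.mem_setOf_eq, Set.mem_insert_iff,
    Set.mem_singleton_iff] <;> decide

lemma memD14 {n : Nat} (h : n ∈ N14) : toSet (fromN n) ∈ D514 := by
  simp only [N14, List.mem_cons, List.not_mem_nil, or_false] at h
  rcases h with rfl|rfl|rfl|rfl|rfl|rfl|rfl|rfl|rfl|rfl|rfl|rfl|rfl|rfl
  · rw [lit1]; exact (Or.inl rfl)
  · rw [lit2]; exact Or.inr ((Or.inl rfl))
  · rw [lit4]; exact Or.inr (Or.inr ((Or.inl rfl)))
  · rw [lit8]; exact Or.inr (Or.inr (Or.inr ((Or.inl rfl))))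
  · rw [lit16]; exact Or.inr (Or.inr (Or.inr (Or.inr ((Or.inl rfl)))))
  · rw [lit6]; exact Or.inr (Or.inr (Or.inr (Or.inr (Or.inr ((Or.inl rfl))))))
  · rw [lit10]; exact Or.inr (Or.inr (Or.inr (Or.inr (Or.inr (Or.inr ((Or.inl rfl)))))))
  · rw [lit3]; exact Or.inr (Or.inr (Or.inr (Or.inr (Or.inr (Or.inr (Or.inr ((Or.inl rfl))))))))
  · rw [lit7]; exact Or.inr (Or.inr (Or.inr (Or.inr (Or.inr (Or.inr (Or.inr (Or.inr ((Or.inl rfl)))))))))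
  · rw [lit11]; exact Or.inr (Or.inr (Or.inr (Or.inr (Or.inr (Or.inr (Or.inr (Or.inr (Or.inr ((Or.inl rfl))))))))))
  · rw [lit30]; exact Or.inr (Or.inr (Or.inr (Or.inr (Or.inr (Or.inr (Or.inr (Or.inr (Or.inr (Or.inr ((Or.inl rfl)))))))))))
  · rw [lit31]; exact Or.inr (Or.inr (Or.inr (Or.inr (Or.inr (Or.inr (Or.inr (Or.inr (Or.inr (Or.inr (Or.inr ((Or.inl rfl))))))))))))
  · rw [lit20]; exact Or.inr (Or.inr (Or.inr (Or.inr (Or.inr (Or.inr (Or.inr (Or.inr (Or.inr (Or.inr (Or.inr (Or.inr ((Or.inl rfl)))))))))))))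
  · rw [lit24]; exact Or.inr (Or.inr (Or.inr (Or.inr (Or.inr (Or.inr (Or.inr (Or.inr (Or.inr (Or.inr (Or.inr (Or.inr (Or.inr (rfl)))))))))))))

lemma reprD14 {R : RCC5Rel} (hR : R ∈ D514) : ∃ n ∈ N14, R = toSet (fromN n) := by
  simp only [D514, Set.mem_insert_iff, Set.mem_singleton_iff] at hR
  rcases hR with rfl|rfl|rfl|rfl|rfl|rfl|rfl|rfl|rfl|rfl|rfl|rfl|rfl|rfl
  · exact ⟨1, by decide, (lit1).symm⟩
  · exact ⟨2, by decide, (lit2).symm⟩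
  · exact ⟨4, by decide, (lit4).symm⟩
  · exact ⟨8, by decide, (lit8).symm⟩
  · exact ⟨16, by decide, (lit16).symm⟩
  · exact ⟨6, by decide, (lit6).symm⟩
  · exact ⟨10, by decide, (lit10).symm⟩
  · exact ⟨3, by decide, (lit3).symm⟩
  · exact ⟨7, by decide, (lit7).symm⟩
  · exact ⟨11, by decide, (lit11).symm⟩
  · exact ⟨30, by decide, (lit30).symm⟩
  · exact ⟨31, by decide, (lit31).symm⟩
  · exact ⟨20, by decide, (lit20).symm⟩
  · exact ⟨24, by decide, (lit24).symm⟩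

lemma NB_of_14 {n : Nat} (h : n ∈ N14) : n ∈ NB := by
  have := List.all_eq_true.mp (List.all_eq_true.mp crunch14 n h) n h
  simp only [Bool.and_eq_true, decide_eq_true_eq] at this
  exact this.1.2

lemma crunchD14 {r s : Nat} (hr : r ∈ N14) (hs : s ∈ N14) :
    compN r s ∈ N14 ∧ convN r ∈ N14 ∧ (r &&& s ≠ 0 → (r &&& s) ∈ N14) := by
  have h := List.all_eq_true.mp (List.all_eq_true.mp crunch14 r hr) s hs
  simp only [Bool.and_eq_true, Bool.or_eq_true, decide_eq_true_eq] at h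
  refine ⟨h.1.1.1, h.1.1.2, fun h0 => ?_⟩
  rcases h.2 with h' | h'
  · exact absurd h' h0
  · exact h'

lemma distD14 {r t1 t2 : Nat} (hr : r ∈ N14) (h1 : t1 ∈ N14) (h2 : t2 ∈ N14)
    (h0 : t1 &&& t2 ≠ 0) :
    compN r (t1 &&& t2) = (compN r t1 &&& compN r t2) ∧
    compN (t1 &&& t2) r = (compN t1 r &&& compN t2 r) := by
  have h := List.all_eq_true.mp (List.all_eq_true.mp
    (List.all_eq_true.mp dist14 r hr) t1 h1) t2 h2
  simp only [Bool.and_eq_true, Bool.or_eq_true, decide_eq_true_eq] at h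
  rcases h with h' | h'
  · exact absurd h' h0
  · exact h'

lemma memD20 {n : Nat} (h : n ∈ N20) : toSet (fromN n) ∈ D520 := by
  simp only [N20, List.mem_cons, List.not_mem_nil, or_false] at h
  rcases h with rfl|rfl|rfl|rfl|rfl|rfl|rfl|rfl|rfl|rfl|rfl|rfl|rfl|rfl|rfl|rfl|rfl|rfl|rfl|rfl
  · rw [lit1]; exact (Or.inl rfl)
  · rw [lit2]; exact Or.inr ((Or.inl rfl))
  · rw [lit4]; exact Or.inr (Or.inr ((Or.inl rfl)))
  · rw [lit8]; exact Or.inr (Or.inr (Or.inr ((Or.inl rfl))))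
  · rw [lit16]; exact Or.inr (Or.inr (Or.inr (Or.inr ((Or.inl rfl)))))
  · rw [lit6]; exact Or.inr (Or.inr (Or.inr (Or.inr (Or.inr ((Or.inl rfl))))))
  · rw [lit10]; exact Or.inr (Or.inr (Or.inr (Or.inr (Or.inr (Or.inr ((Or.inl rfl)))))))
  · rw [lit3]; exact Or.inr (Or.inr (Or.inr (Or.inr (Or.inr (Or.inr (Or.inr ((Or.inl rfl))))))))
  · rw [lit7]; exact Or.inr (Or.inr (Or.inr (Or.inr (Or.inr (Or.inr (Or.inr (Or.inr ((Or.inl rfl)))))))))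
  · rw [lit11]; exact Or.inr (Or.inr (Or.inr (Or.inr (Or.inr (Or.inr (Or.inr (Or.inr (Or.inr ((Or.inl rfl))))))))))
  · rw [lit30]; exact Or.inr (Or.inr (Or.inr (Or.inr (Or.inr (Or.inr (Or.inr (Or.inr (Or.inr (Or.inr ((Or.inl rfl)))))))))))
  · rw [lit31]; exact Or.inr (Or.inr (Or.inr (Or.inr (Or.inr (Or.inr (Or.inr (Or.inr (Or.inr (Or.inr (Or.inr ((Or.inl rfl))))))))))))
  · rw [lit18]; exact Or.inr (Or.inr (Or.inr (Or.inr (Or.inr (Or.inr (Or.inr (Or.inr (Or.inr (Or.inr (Or.inr (Or.inr ((Or.inl rfl)))))))))))))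
  · rw [lit22]; exact Or.inr (Or.inr (Or.inr (Or.inr (Or.inr (Or.inr (Or.inr (Or.inr (Or.inr (Or.inr (Or.inr (Or.inr (Or.inr ((Or.inl rfl))))))))))))))
  · rw [lit26]; exact Or.inr (Or.inr (Or.inr (Or.inr (Or.inr (Or.inr (Or.inr (Or.inr (Or.inr (Or.inr (Or.inr (Or.inr (Or.inr (Or.inr ((Or.inl rfl)))))))))))))))
  · rw [lit14]; exact Or.inr (Or.inr (Or.inr (Or.inr (Or.inr (Or.inr (Or.inr (Or.inr (Or.inr (Or.inr (Or.inr (Or.inr (Or.inr (Or.inr (Or.inr ((Or.inl rfl))))))))))))))))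
  · rw [lit19]; exact Or.inr (Or.inr (Or.inr (Or.inr (Or.inr (Or.inr (Or.inr (Or.inr (Or.inr (Or.inr (Or.inr (Or.inr (Or.inr (Or.inr (Or.inr (Or.inr ((Or.inl rfl)))))))))))))))))
  · rw [lit23]; exact Or.inr (Or.inr (Or.inr (Or.inr (Or.inr (Or.inr (Or.inr (Or.inr (Or.inr (Or.inr (Or.inr (Or.inr (Or.inr (Or.inr (Or.inr (Or.inr (Or.inr ((Or.inl rfl))))))))))))))))))
  · rw [lit27]; exact Or.inr (Or.inr (Or.inr (Or.inr (Or.inr (Or.inr (Or.inr (Or.inr (Or.inr (Or.inr (Or.inr (Or.inr (Or.inr (Or.inr (Or.inr (Or.inr (Or.inr (Or.inr ((Or.inl rfl)))))))))))))))))))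
  · rw [lit15]; exact Or.inr (Or.inr (Or.inr (Or.inr (Or.inr (Or.inr (Or.inr (Or.inr (Or.inr (Or.inr (Or.inr (Or.inr (Or.inr (Or.inr (Or.inr (Or.inr (Or.inr (Or.inr (Or.inr (rfl)))))))))))))))))))

lemma reprD20 {R : RCC5Rel} (hR : R ∈ D520) : ∃ n ∈ N20, R = toSet (fromN n) := by
  simp only [D520, Set.mem_insert_iff, Set.mem_singleton_iff] at hR
  rcases hR with rfl|rfl|rfl|rfl|rfl|rfl|rfl|rfl|rfl|rfl|rfl|rfl|rfl|rfl|rfl|rfl|rfl|rfl|rfl|rfl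
  · exact ⟨1, by decide, (lit1).symm⟩
  · exact ⟨2, by decide, (lit2).symm⟩
  · exact ⟨4, by decide, (lit4).symm⟩
  · exact ⟨8, by decide, (lit8).symm⟩
  · exact ⟨16, by decide, (lit16).symm⟩
  · exact ⟨6, by decide, (lit6).symm⟩
  · exact ⟨10, by decide, (lit10).symm⟩
  · exact ⟨3, by decide, (lit3).symm⟩
  · exact ⟨7, by decide, (lit7).symm⟩
  · exact ⟨11, by decide, (lit11).symm⟩
  · exact ⟨30, by decide, (lit30).symm⟩
  · exact ⟨31, by decide, (lit31).symm⟩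
  · exact ⟨18, by decide, (lit18).symm⟩
  · exact ⟨22, by decide, (lit22).symm⟩
  · exact ⟨26, by decide, (lit26).symm⟩
  · exact ⟨14, by decide, (lit14).symm⟩
  · exact ⟨19, by decide, (lit19).symm⟩
  · exact ⟨23, by decide, (lit23).symm⟩
  · exact ⟨27, by decide, (lit27).symm⟩
  · exact ⟨15, by decide, (lit15).symm⟩

lemma NB_of_20 {n : Nat} (h : n ∈ N20) : n ∈ NB := by
  have := List.all_eq_true.mp (List.all_eq_true.mp crunch20 n h) n h
  simp only [Bool.and_eq_true, decide_eq_true_eq] at this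
  exact this.1.2

lemma crunchD20 {r s : Nat} (hr : r ∈ N20) (hs : s ∈ N20) :
    compN r s ∈ N20 ∧ convN r ∈ N20 ∧ (r &&& s ≠ 0 → (r &&& s) ∈ N20) := by
  have h := List.all_eq_true.mp (List.all_eq_true.mp crunch20 r hr) s hs
  simp only [Bool.and_eq_true, Bool.or_eq_true, decide_eq_true_eq] at h
  refine ⟨h.1.1.1, h.1.1.2, fun h0 => ?_⟩
  rcases h.2 with h' | h'
  · exact absurd h' h0
  · exact h'

lemma distD20 {r t1 t2 : Nat} (hr : r ∈ N20) (h1 : t1 ∈ N20) (h2 : t2 ∈ N20)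
    (h0 : t1 &&& t2 ≠ 0) :
    compN r (t1 &&& t2) = (compN r t1 &&& compN r t2) ∧
    compN (t1 &&& t2) r = (compN t1 r &&& compN t2 r) := by
  have h := List.all_eq_true.mp (List.all_eq_true.mp
    (List.all_eq_true.mp dist20 r hr) t1 h1) t2 h2
  simp only [Bool.and_eq_true, Bool.or_eq_true, decide_eq_true_eq] at h
  rcases h with h' | h'
  · exact absurd h' h0
  · exact h'

lemma bridge_all {m n : Nat} (hm : m ∈ NB) (hn : n ∈ NB) :
    RCC5Rel.comp (toSet (fromN m)) (toSet (fromN n)) = toSet (fromN (compN m n)) ∧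
    RCC5Rel.conv (toSet (fromN m)) = toSet (fromN (convN m)) ∧
    toSet (fromN m) ∩ toSet (fromN n) = toSet (fromN (m &&& n)) := by
  have h := List.all_eq_true.mp (List.all_eq_true.mp bridgeB m hm) n hn
  simp only [Bool.and_eq_true] at h
  exact ⟨by rw [comp_toSet]; exact toSet_eq h.1.1,
         by rw [conv_toSet]; exact toSet_eq h.1.2,
         by rw [inter_toSet]; exact toSet_eq h.2⟩

lemma and_ne_zero {m n : Nat} (hm : m ∈ NB) (hn : n ∈ NB)
    (h : (toSet (fromN m) ∩ toSet (fromN n)).Nonempty) : m &&& n ≠ 0 := by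
  rw [(bridge_all hm hn).2.2] at h
  obtain ⟨b, hb⟩ := h
  intro h0
  rw [h0] at hb
  simp only [toSet, Set.mem_setOf_eq, fromN, Nat.zero_testBit] at hb
  exact Bool.noConfusion hb

lemma main_glue (N : List Nat) (D : Set RCC5Rel)
    (hmem : ∀ n ∈ N, toSet (fromN n) ∈ D)
    (hrepr : ∀ R ∈ D, ∃ n ∈ N, R = toSet (fromN n))
    (hNB : ∀ n ∈ N, n ∈ NB)
    (hbasic : ∀ b : RCC5Basic, ({b} : RCC5Rel) ∈ D)
    (hcr : ∀ r ∈ N, ∀ s ∈ N,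
      compN r s ∈ N ∧ convN r ∈ N ∧ (r &&& s ≠ 0 → (r &&& s) ∈ N))
    (hdist : ∀ r ∈ N, ∀ t1 ∈ N, ∀ t2 ∈ N, t1 &&& t2 ≠ 0 →
      compN r (t1 &&& t2) = (compN r t1 &&& compN r t2) ∧
      compN (t1 &&& t2) r = (compN t1 r &&& compN t2 r)) :
    IsDistributiveSubalgebra D := by
  refine ⟨hbasic, ?_, ?_, ?_, ?_⟩
  · rintro R hR
    obtain ⟨n, hn, rfl⟩ := hrepr R hR
    rw [(bridge_all (hNB n hn) (hNB n hn)).2.1]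
    exact hmem _ (hcr n hn n hn).2.1
  · rintro R hR S hS
    obtain ⟨m, hm, rfl⟩ := hrepr R hR
    obtain ⟨n, hn, rfl⟩ := hrepr S hS
    rw [(bridge_all (hNB m hm) (hNB n hn)).1]
    exact hmem _ (hcr m hm n hn).1
  · rintro R hR S hS hne
    obtain ⟨m, hm, rfl⟩ := hrepr R hR
    obtain ⟨n, hn, rfl⟩ := hrepr S hS
    have h0 := and_ne_zero (hNB m hm) (hNB n hn) hne
    rw [(bridge_all (hNB m hm) (hNB n hn)).2.2]
    exact hmem _ ((hcr m hm n hn).2.2 h0)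
  · rintro R hR T1 hT1 T2 hT2 hne
    obtain ⟨r, hr, rfl⟩ := hrepr R hR
    obtain ⟨t1, h1, rfl⟩ := hrepr T1 hT1
    obtain ⟨t2, h2, rfl⟩ := hrepr T2 hT2
    have h0 := and_ne_zero (hNB t1 h1) (hNB t2 h2) hne
    have hI : t1 &&& t2 ∈ N := (hcr t1 h1 t2 h2).2.2 h0
    have e1 := (bridge_all (hNB t1 h1) (hNB t2 h2)).2.2
    have hc1 : compN r t1 ∈ N := (hcr r hr t1 h1).1
    have hc2 : compN r t2 ∈ N := (hcr r hr t2 h2).1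
    have hc1' : compN t1 r ∈ N := (hcr t1 h1 r hr).1
    have hc2' : compN t2 r ∈ N := (hcr t2 h2 r hr).1
    obtain ⟨d1, d2⟩ := hdist r hr t1 h1 t2 h2 h0
    constructor
    · rw [e1, (bridge_all (hNB r hr) (hNB _ hI)).1,
         (bridge_all (hNB r hr) (hNB t1 h1)).1,
         (bridge_all (hNB r hr) (hNB t2 h2)).1,
         (bridge_all (hNB _ hc1) (hNB _ hc2)).2.2, d1]
    · rw [e1, (bridge_all (hNB _ hI) (hNB r hr)).1,
         (bridge_all (hNB t1 h1) (hNB r hr)).1,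
         (bridge_all (hNB t2 h2) (hNB r hr)).1,
         (bridge_all (hNB _ hc1') (hNB _ hc2')).2.2, d2]

/-- `D⁵₁₄` and `D⁵₂₀` are distributive subalgebras of RCC5. -/
theorem d514_d520_distributive_subalgebras :
    IsDistributiveSubalgebra D514 ∧ IsDistributiveSubalgebra D520 := by
  constructor
  · refine main_glue N14 D514 (fun n hn => memD14 hn) (fun R hR => reprD14 hR)
      (fun n hn => NB_of_14 hn) ?_ (fun r hr s hs => crunchD14 hr hs)
      (fun r hr t1 h1 t2 h2 h0 => distD14 hr h1 h2 h0)
    intro b; cases b <;> [rw [← lit1]; rw [← lit2]; rw [← lit4]; rw [← lit8]; rw [← lit16]] <;>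
      [exact memD14 (by decide); exact memD14 (by decide); exact memD14 (by decide);
       exact memD14 (by decide); exact memD14 (by decide)]
  · refine main_glue N20 D520 (fun n hn => memD20 hn) (fun R hR => reprD20 hR)
      (fun n hn => NB_of_20 hn) ?_ (fun r hr s hs => crunchD20 hr hs)
      (fun r hr t1 h1 t2 h2 h0 => distD20 hr h1 h2 h0)
    intro b; cases b <;> [rw [← lit1]; rw [← lit2]; rw [← lit4]; rw [← lit8]; rw [← lit16]] <;>
      [exact memD20 (by decide); exact memD20 (by decide); exact memD20 (by decide);
       exact memD20 (by decide); exact memD20 (by decide)]
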